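/- arXiv:2409.07099 — 2 statements merged into one kernel-verified Lean document; each statement's English description precedes it below -/
import Mathlib

section
/- If G has m ≥ 2 edges and σ denotes the standard deviation of the d-radii of the edges of G, i.e. σ = √((1/m) Σ_{uv ∈ E(G)} (|z_{uv}| − SO(G)/m)²), then (m/√(m−1))·σ < SO(G). -/
open Finset Real

noncomputable def dRad {V : Type*} [Fintype V] (G : SimpleGraph V) [DecidableRel G.Adj]
    (e : Sym2 V) : ℝ :=
  Sym2.lift ⟨fun u v => Real.sqrt ((G.degree u : ℝ) ^ 2 + (G.degree v : ℝ) ^ 2),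
    fun u v => by simp [add_comm]⟩ e

noncomputable def somborIndex {V : Type*} [Fintype V] [DecidableEq V] (G : SimpleGraph V)
    [DecidableRel G.Adj] : ℝ :=
  ∑ e ∈ G.edgeFinset, dRad G e

/-! Each d-radius is positive, so with at least two edges every d-radius is strictly smaller
than `SO(G)`; hence `∑ |z_e|² < SO(G)²`. Writing the variance as `(1/m) ∑ |z_e|² - (SO(G)/m)²`,
the claimed bound `m² σ² < (m - 1) SO(G)²` is exactly this inequality. -/

namespace Finset

variable {ι : Type*} {s : Finset ι} {f : ι → ℝ}

lemma sum_sq_lt_sq_sum_of_pos (hf : ∀ i ∈ s, 0 < f i) (hs : 1 < #s) :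
    ∑ i ∈ s, f i ^ 2 < (∑ i ∈ s, f i) ^ 2 := by
  have lt_sum : ∀ i ∈ s, f i < ∑ j ∈ s, f j := by
    intro i hi
    obtain ⟨j, hj, hji⟩ := exists_mem_ne hs i
    exact single_lt_sum hji hi hj (hf j hj) fun k hk _ => (hf k hk).le
  calc ∑ i ∈ s, f i ^ 2 < ∑ i ∈ s, f i * ∑ j ∈ s, f j :=
        sum_lt_sum_of_nonempty (card_pos.mp (by omega)) fun i hi => by
          rw [sq]; exact mul_lt_mul_of_pos_left (lt_sum i hi) (hf i hi)
    _ = (∑ i ∈ s, f i) ^ 2 := by rw [← sum_mul, sq]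

lemma sum_sub_mean_sq (f : ι → ℝ) (s : Finset ι) :
    ∑ i ∈ s, (f i - (∑ j ∈ s, f j) / #s) ^ 2 = ∑ i ∈ s, f i ^ 2 - (∑ i ∈ s, f i) ^ 2 / #s := by
  rcases s.eq_empty_or_nonempty with rfl | hs
  · simp
  have hcard : (#s : ℝ) ≠ 0 := by exact_mod_cast hs.card_pos.ne'
  simp only [sub_sq, sum_add_distrib, sum_sub_distrib, sum_const, nsmul_eq_mul, ← sum_mul,
    ← mul_sum]
  field_simp
  ring

lemma card_div_sqrt_mul_stdDev_lt_sum (hf : ∀ i ∈ s, 0 < f i) (hs : 2 ≤ #s) :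
    (#s / √(#s - 1)) * √((1 / #s) * ∑ i ∈ s, (f i - (∑ j ∈ s, f j) / #s) ^ 2)
      < ∑ i ∈ s, f i := by
  have hm : (2 : ℝ) ≤ #s := by exact_mod_cast hs
  have hS : 0 < ∑ i ∈ s, f i := sum_pos hf (card_pos.mp (by omega))
  have hsq := sum_sq_lt_sq_sum_of_pos hf (by omega)
  refine abs_lt_of_sq_lt_sq' ?_ hS.le |>.2
  rw [mul_pow, div_pow, sq_sqrt (by linarith), sq_sqrt (by positivity), sum_sub_mean_sq,
    div_mul_eq_mul_div, div_lt_iff₀ (by linarith)]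
  field_simp
  nlinarith

end Finset

lemma dRad_pos {V : Type*} [Fintype V] [DecidableEq V] (G : SimpleGraph V) [DecidableRel G.Adj]
    {e : Sym2 V} (he : e ∈ G.edgeFinset) : 0 < dRad G e := by
  induction e using Sym2.ind with
  | _ u v =>
    rw [SimpleGraph.mem_edgeFinset, SimpleGraph.mem_edgeSet] at he
    have hu : 0 < G.degree u := G.degree_pos_iff_exists_adj u |>.mpr ⟨v, he⟩
    exact sqrt_pos.mpr (by positivity)

/-- If `G` has `m ≥ 2` edges and `σ` is the standard deviation of the d-radii of the edges of
`G`, then `(m/√(m−1))·σ < SO(G)`. -/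
theorem stmt7 {V : Type*} [Fintype V] [DecidableEq V] (G : SimpleGraph V) [DecidableRel G.Adj]
    (m : ℕ) (hm : G.edgeFinset.card = m) (h2 : 2 ≤ m) :
    ((m : ℝ) / Real.sqrt ((m : ℝ) - 1)) *
        Real.sqrt ((1 / m) * ∑ e ∈ G.edgeFinset, (dRad G e - somborIndex G / m) ^ 2)
      < somborIndex G := by
  subst hm
  exact card_div_sqrt_mul_stdDev_lt_sum (fun e he => dRad_pos G he) h2
end

section
/- Let G have m ≥ 1 edges and let β : E(G) → ℝ satisfy β_e > 0 for every edge e and Σ_{e ∈ E(G)} β_e = 1, with β_max = max_{e ∈ E(G)} β_e. If R_g is the geometric mean of the d-radii of the edges of G, then (1/β_max)·(Σ_{e ∈ E(G)} β_e |z_e| − ∏_{e ∈ E(G)} |z_e|^{β_e}) + m·R_g ≤ SO(G). -/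
/-!
Apply the weighted AM–GM inequality to the `m + 1` numbers `P = ∏ zₑ ^ βₑ`, with weight
`t / m`, and `zₑ` for each edge `e`, with weight `(1 - t βₑ) / m`, where `t = 1 / β_max`, so
that all weights are nonnegative. The exponent of each `zₑ` in the geometric mean collapses to
`βₑ t / m + (1 - t βₑ) / m = 1 / m`, so the geometric side is `R_g`, while `m` times the
arithmetic side is `t P + SO(G) - t ∑ βₑ zₑ`.
-/

open Finset Real

namespace Real

variable {ι : Type*} {s : Finset ι} {x β : ι → ℝ}

theorem geom_mean_le_arith_mean_sub_mul_weighted_gap {t : ℝ} (hx : ∀ i ∈ s, 0 ≤ x i)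
    (hβ : ∑ i ∈ s, β i = 1) (ht : 0 ≤ t) (htβ : ∀ i ∈ s, t * β i ≤ 1) :
    #s * (∏ i ∈ s, x i) ^ (1 / #s : ℝ)
      ≤ ∑ i ∈ s, x i - t * (∑ i ∈ s, β i * x i - ∏ i ∈ s, x i ^ β i) := by
  set n : ℝ := (#s : ℝ)
  set P := ∏ i ∈ s, x i ^ β i
  have hn : 0 < n := by
    have : s.Nonempty := nonempty_of_sum_ne_zero (hβ ▸ one_ne_zero)
    exact Nat.cast_pos.mpr this.card_pos
  let w : Option ι → ℝ := fun o => o.elim (t / n) fun i => (1 - t * β i) / n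
  let z : Option ι → ℝ := fun o => o.elim P x
  have amgm := geom_mean_le_arith_mean_weighted s.insertNone w z ?_ ?_ ?_
  · simp only [prod_insertNone, sum_insertNone, w, z, Option.elim] at amgm
    have hgeom :
        P ^ (t / n) * ∏ i ∈ s, x i ^ ((1 - t * β i) / n) = (∏ i ∈ s, x i) ^ (1 / n) := by
      rw [← finsetProd_rpow s _ (fun i hi => rpow_nonneg (hx i hi) _),
        ← finsetProd_rpow s _ hx, ← prod_mul_distrib]
      refine prod_congr rfl fun i hi => ?_
      have hexp : β i * (t / n) + (1 - t * β i) / n = 1 / n := by field_simp; ring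
      rw [← rpow_mul (hx i hi), ← rpow_add' (hx i hi) (hexp ▸ by positivity), hexp]
    have harith : t / n * P + ∑ i ∈ s, (1 - t * β i) / n * x i
        = (∑ i ∈ s, x i - t * (∑ i ∈ s, β i * x i - P)) / n := by
      simp only [div_mul_eq_mul_div, ← sum_div, ← add_div, sub_mul, one_mul, sum_sub_distrib,
        mul_assoc, ← mul_sum]
      ring
    rw [hgeom, harith, le_div_iff₀ hn] at amgm
    linarith
  · rintro (_ | i) hi
    · exact div_nonneg ht hn.le
    · exact div_nonneg (by linarith [htβ i (by simpa using hi)]) hn.le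
  · simp only [sum_insertNone, w, Option.elim, ← sum_div, sum_sub_distrib, sum_const, ← mul_sum,
      hβ, nsmul_eq_mul, mul_one]
    field_simp
    ring
  · rintro (_ | i) hi
    · exact prod_nonneg fun i hi => rpow_nonneg (hx i hi) _
    · exact hx i (by simpa using hi)

end Real

theorem dRad_nonneg {V : Type*} [Fintype V] (G : SimpleGraph V) [DecidableRel G.Adj]
    (e : Sym2 V) : 0 ≤ dRad G e := by
  induction e with
  | _ u v => exact sqrt_nonneg _

theorem stmt9_general {V : Type*} [Fintype V] [DecidableEq V] (G : SimpleGraph V) [DecidableRel G.Adj]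
    (m : ℕ) (hm : G.edgeFinset.card = m)
    (β : Sym2 V → ℝ)
    (hβsum : ∑ e ∈ G.edgeFinset, β e = 1)
    (βmax : ℝ) (hub : ∀ e ∈ G.edgeFinset, β e ≤ βmax) :
    (1 / βmax) * ((∑ e ∈ G.edgeFinset, β e * dRad G e)
          - ∏ e ∈ G.edgeFinset, dRad G e ^ β e)
        + (m : ℝ) * (∏ e ∈ G.edgeFinset, dRad G e) ^ ((1 : ℝ) / m)
      ≤ somborIndex G := by
  have hβmax : 0 < βmax := by
    have hcard : 1 ≤ (m : ℝ) * βmax := by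
      simpa [hβsum, hm] using sum_le_card_nsmul _ _ _ hub
    nlinarith [m.cast_nonneg (α := ℝ)]
  have key := geom_mean_le_arith_mean_sub_mul_weighted_gap (fun e _ => dRad_nonneg G e) hβsum
    (one_div_nonneg.2 hβmax.le) fun e he => by
      rw [one_div_mul_eq_div, div_le_one hβmax]
      exact hub e he
  rw [hm] at key
  rw [somborIndex]
  linarith

/-- If `β` assigns positive weights summing to `1` to the edges of `G`, `β_max` is the largest
weight, and `R_g` is the geometric mean of the d-radii, then
`(1/β_max)·(∑ β_e|z_e| − ∏ |z_e|^{β_e}) + m·R_g ≤ SO(G)`. -/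
theorem stmt9 {V : Type*} [Fintype V] [DecidableEq V] (G : SimpleGraph V) [DecidableRel G.Adj]
    (m : ℕ) (hm : G.edgeFinset.card = m) (h1 : 1 ≤ m)
    (β : Sym2 V → ℝ) (hβpos : ∀ e ∈ G.edgeFinset, 0 < β e)
    (hβsum : ∑ e ∈ G.edgeFinset, β e = 1)
    (βmax : ℝ) (hub : ∀ e ∈ G.edgeFinset, β e ≤ βmax)
    (hmem : ∃ e ∈ G.edgeFinset, β e = βmax) :
    (1 / βmax) * ((∑ e ∈ G.edgeFinset, β e * dRad G e)
          - ∏ e ∈ G.edgeFinset, dRad G e ^ β e)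
        + (m : ℝ) * (∏ e ∈ G.edgeFinset, dRad G e) ^ ((1 : ℝ) / m)
      ≤ somborIndex G :=
  stmt9_general G m hm β hβsum βmax hub
end
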